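/- For every finite simple graph G, there exists a critical independent set I of G (possibly empty) such that I is contained in D(G), where D(G) is the set of vertices missed by some maximum matching. -/

import Mathlib

/-! Let `I` be an inclusion-minimal critical independent set and `v ∈ I`. For `A ⊆ N(I)` we have
Hall's condition `|A| ≤ |N(A) ∩ (I \ {v})|`: otherwise `I \ N(A)` would be a smaller critical
independent set. Hence `N(I)` can be matched into `I \ {v}`. In a maximum matching, every edge
meeting `I ∪ N(I)` contains a vertex of `N(I)`, so there are at most `|N(I)|` of them; replacing
them by the Hall matching gives a maximum matching that misses `v`. -/

open SimpleGraph

universe u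

variable {V : Type u}

/-- `S` is an independent set of `G`. -/
def IsIndep (G : SimpleGraph V) (S : Set V) : Prop :=
  ∀ ⦃u⦄, u ∈ S → ∀ ⦃v⦄, v ∈ S → ¬ G.Adj u v

/-- The neighborhood `N(S)` of a vertex set. -/
def NSet (G : SimpleGraph V) (S : Set V) : Set V := {v | ∃ u ∈ S, G.Adj u v}

/-- `S` is a maximum independent set of `G`. -/
def IsMaxIndep (G : SimpleGraph V) (S : Set V) : Prop :=
  IsIndep G S ∧ ∀ T : Set V, IsIndep G T → T.ncard ≤ S.ncard

/-- The independence number `α(G)`. -/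
noncomputable def indepNum (G : SimpleGraph V) : ℕ :=
  sSup {n | ∃ S : Set V, IsIndep G S ∧ S.ncard = n}

/-- `core(G)`: intersection of all maximum independent sets. -/
def core (G : SimpleGraph V) : Set V := ⋂₀ {S | IsMaxIndep G S}

/-- `corona(G)`: union of all maximum independent sets. -/
def corona (G : SimpleGraph V) : Set V := ⋃₀ {S | IsMaxIndep G S}

/-- The difference `d_G(S) = |S| - |N(S)|`, as an integer. -/
noncomputable def diffZ (G : SimpleGraph V) (S : Set V) : ℤ :=
  (S.ncard : ℤ) - ((NSet G S).ncard : ℤ)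

/-- `S` is a critical independent set: independent and maximizing `|S| - |N(S)|`
among independent sets. -/
def IsCriticalIndep (G : SimpleGraph V) (S : Set V) : Prop :=
  IsIndep G S ∧ ∀ T : Set V, IsIndep G T → diffZ G T ≤ diffZ G S

/-- `ker(G)`: intersection of all critical independent sets. -/
def kerSet (G : SimpleGraph V) : Set V := ⋂₀ {S | IsCriticalIndep G S}

/-- `M` is a maximum matching of `G`. -/
def IsMaxMatching (G : SimpleGraph V) (M : G.Subgraph) : Prop :=
  M.IsMatching ∧ ∀ M' : G.Subgraph, M'.IsMatching → M'.edgeSet.ncard ≤ M.edgeSet.ncard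

/-- The matching number `μ(G)`. -/
noncomputable def matchNum (G : SimpleGraph V) : ℕ :=
  sSup {n | ∃ M : G.Subgraph, M.IsMatching ∧ M.edgeSet.ncard = n}

/-- `D(G)`: vertices missed by some maximum matching. -/
def DSet (G : SimpleGraph V) : Set V :=
  {v | ∃ M : G.Subgraph, IsMaxMatching G M ∧ v ∉ M.verts}

/-- `C` is the vertex set of an odd cycle of `G`. -/
def IsOddCycle (G : SimpleGraph V) (C : Set V) : Prop :=
  ∃ (u : V) (w : G.Walk u u), w.IsCycle ∧ Odd w.length ∧ ∀ v, v ∈ w.support ↔ v ∈ C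

/-- An edge list is `M`-alternating: consecutive edges, exactly one in `M`. -/
def Alternating (G : SimpleGraph V) (M : G.Subgraph) (l : List (Sym2 V)) : Prop :=
  List.Chain' (fun e f => (e ∈ M.edgeSet ↔ f ∉ M.edgeSet)) l

/-- `w` is an `M`-blossom with base `b`: an odd cycle, alternating, whose two
edges at the base are unmatched (so it carries `⌊length/2⌋` matched edges). -/
structure IsBlossom (G : SimpleGraph V) (M : G.Subgraph) (b : V) (w : G.Walk b b) : Prop where
  cyc : w.IsCycle
  odd : Odd w.length
  alt : Alternating G M w.edges
  first : ∀ e ∈ w.edges.head?, e ∉ M.edgeSet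
  last : ∀ e ∈ w.edges.getLast?, e ∉ M.edgeSet

/-- `p` is an `M`-stem from base `b` to root `r`: an even alternating path
starting (if nonempty) with a matched edge, whose root is `M`-unsaturated. -/
structure IsStem (G : SimpleGraph V) (M : G.Subgraph) (b r : V) (p : G.Walk b r) : Prop where
  path : p.IsPath
  even : Even p.length
  alt : Alternating G M p.edges
  first : ∀ e ∈ p.edges.head?, e ∈ M.edgeSet
  root : r ∉ M.verts

/-- `F` is the vertex set of an `M`-flower of `G` whose blossom has vertex set `C`. -/
def IsFlowerOn (G : SimpleGraph V) (M : G.Subgraph) (C F : Set V) : Prop :=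
  ∃ (b r : V) (w : G.Walk b b) (p : G.Walk b r),
    IsBlossom G M b w ∧ IsStem G M b r p ∧
    (∀ v, v ∈ w.support ↔ v ∈ C) ∧
    (∀ v, v ∈ p.support → v ∈ w.support → v = b) ∧
    F = {v | v ∈ w.support ∨ v ∈ p.support}

/-- The reach set `R(C)` of an odd cycle `C`: union of the vertex sets of all
`M`-flowers with blossom `C`, over all maximum matchings `M`. -/
def reach (G : SimpleGraph V) (C : Set V) : Set V :=
  ⋃₀ {F | ∃ M : G.Subgraph, IsMaxMatching G M ∧ IsFlowerOn G M C F}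

/-- `G` is `R`-disjoint: it has an odd cycle, every odd cycle has nonempty reach
set, and reach sets of distinct odd cycles are disjoint. -/
def RDisjoint (G : SimpleGraph V) : Prop :=
  (∃ C : Set V, IsOddCycle G C) ∧
  (∀ C : Set V, IsOddCycle G C → (reach G C).Nonempty) ∧
  (∀ C C' : Set V, IsOddCycle G C → IsOddCycle G C' → C ≠ C' →
    reach G C ∩ reach G C' = ∅)

/-- `B(G) = V(G) \ ⋃_C R(C)`. -/
def bipartPart (G : SimpleGraph V) : Set V :=
  {v | ∀ C : Set V, IsOddCycle G C → v ∉ reach G C}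

/-- `G` is bipartite: its vertex set splits into two independent sets. -/
def IsBipartiteGraph (G : SimpleGraph V) : Prop :=
  ∃ A B : Set V, (∀ v, v ∈ A ∨ v ∈ B) ∧ A ∩ B = ∅ ∧ IsIndep G A ∧ IsIndep G B

/-- `G` is almost bipartite: it has exactly one odd cycle. -/
def AlmostBipartite (G : SimpleGraph V) : Prop := ∃! C : Set V, IsOddCycle G C

/-- `G` is a König–Egerváry graph: `α(G) + μ(G) = |V(G)|`. -/
def IsKE {W : Type*} (G : SimpleGraph W) : Prop :=
  _root_.indepNum G + matchNum G = Nat.card W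

namespace SimpleGraph.Subgraph

variable {G : SimpleGraph V} {M : G.Subgraph}

lemma IsMatching.eq_of_mem_edgeSet (hM : M.IsMatching) {e₁ e₂ : Sym2 V} (he₁ : e₁ ∈ M.edgeSet)
    (he₂ : e₂ ∈ M.edgeSet) {x : V} (hx₁ : x ∈ e₁) (hx₂ : x ∈ e₂) : e₁ = e₂ := by
  obtain ⟨y₁, rfl⟩ := Sym2.mem_iff_exists.mp hx₁
  obtain ⟨y₂, rfl⟩ := Sym2.mem_iff_exists.mp hx₂
  rw [hM.eq_of_adj_left (M.mem_edgeSet.mp he₁) (M.mem_edgeSet.mp he₂)]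

lemma IsMatching.ncard_le_of_forall_exists_mem [Finite V] (hM : M.IsMatching)
    {E : Set (Sym2 V)} (hE : E ⊆ M.edgeSet) {K : Set V} (hK : ∀ e ∈ E, ∃ x ∈ K, x ∈ e) :
    E.ncard ≤ K.ncard := by
  classical
  have := Fintype.ofFinite V
  rw [Set.ncard_eq_toFinset_card' E, Set.ncard_eq_toFinset_card' K]
  refine Finset.card_le_card_of_forall_subsingleton (fun e x => x ∈ e) (by simpa using hK) ?_
  rintro x - e₁ ⟨he₁, hx₁⟩ e₂ ⟨he₂, hx₂⟩
  rw [Set.mem_toFinset] at he₁ he₂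
  exact hM.eq_of_mem_edgeSet (hE he₁) (hE he₂) hx₁ hx₂

lemma IsMatching.induce (hM : M.IsMatching) {S : Set V} (hS : S ⊆ M.verts)
    (hSM : ∀ ⦃x y⦄, x ∈ S → M.Adj x y → y ∈ S) : (M.induce S).IsMatching := by
  intro x hx
  obtain ⟨y, hxy, hy⟩ := hM (hS hx)
  exact ⟨y, ⟨hx, hSM hx hxy, hxy⟩, fun z hz => hy z hz.2.2⟩

theorem IsMatching.exists_sup_ncard_edgeSet_le [Finite V] (hM : M.IsMatching) {M₀ : G.Subgraph}
    (hM₀ : M₀.IsMatching) {P K : Set V} (hK : ∀ ⦃x y⦄, M.Adj x y → x ∈ P → x ∈ K ∨ y ∈ K)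
    (hM₀P : M₀.verts ⊆ P) (hcard : K.ncard ≤ M₀.edgeSet.ncard) :
    ∃ M' : G.Subgraph, M'.IsMatching ∧ M.edgeSet.ncard ≤ M'.edgeSet.ncard ∧
      M'.verts ⊆ M₀.verts ∪ Pᶜ := by
  set S : Set V := {x | ∃ y, M.Adj x y ∧ x ∉ P ∧ y ∉ P}
  set E : Set (Sym2 V) := {e ∈ M.edgeSet | ∃ x ∈ P, x ∈ e}
  have hSP : Disjoint M₀.verts S :=
    Set.disjoint_left.mpr fun _ hx ⟨_, _, hxP, _⟩ => hxP (hM₀P hx)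
  have hM₁ : (M.induce S).IsMatching :=
    hM.induce (fun _ ⟨_, hxy, _⟩ => M.edge_vert hxy) fun x _ ⟨_, hxw, hxP, hwP⟩ hxy =>
      ⟨x, hxy.symm, hM.eq_of_adj_left hxw hxy ▸ hwP, hxP⟩
  have hE : E.ncard ≤ K.ncard := by
    refine hM.ncard_le_of_forall_exists_mem (fun e he => he.1) ?_
    rintro e ⟨he, x, hxP, hxe⟩
    obtain ⟨y, rfl⟩ := Sym2.mem_iff_exists.mp hxe
    rcases hK he hxP with hx | hy
    exacts [⟨x, hx, Sym2.mem_mk_left x y⟩, ⟨y, hy, Sym2.mem_mk_right x y⟩]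
  have hcover : M.edgeSet ⊆ E ∪ (M.induce S).edgeSet := by
    intro e he
    induction e using Sym2.ind with | _ x y => ?_
    by_cases hx : x ∈ P
    · exact Or.inl ⟨he, x, hx, Sym2.mem_mk_left x y⟩
    by_cases hy : y ∈ P
    · exact Or.inl ⟨he, y, hy, Sym2.mem_mk_right x y⟩
    exact Or.inr ⟨⟨y, he, hx, hy⟩, ⟨x, M.adj_symm he, hy, hx⟩, he⟩
  have hdisj : Disjoint M₀.edgeSet (M.induce S).edgeSet := by
    refine Set.disjoint_left.mpr fun e he₀ he₁ => ?_
    induction e using Sym2.ind with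
    | _ x y => exact hSP.notMem_of_mem_left (M₀.edge_vert he₀) he₁.1
  refine ⟨M₀ ⊔ M.induce S, hM₀.sup hM₁ ?_, ?_, ?_⟩
  · rwa [hM₀.support_eq_verts, hM₁.support_eq_verts]
  · calc M.edgeSet.ncard ≤ (E ∪ (M.induce S).edgeSet).ncard := Set.ncard_le_ncard hcover
      _ ≤ E.ncard + (M.induce S).edgeSet.ncard := Set.ncard_union_le _ _
      _ ≤ M₀.edgeSet.ncard + (M.induce S).edgeSet.ncard := by omega
      _ = (M₀ ⊔ M.induce S).edgeSet.ncard := by rw [edgeSet_sup, Set.ncard_union_eq hdisj]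
  · exact Set.union_subset_union_right _ fun _ ⟨_, _, hxP, _⟩ => hxP

lemma exists_isMatching_of_injOn [Finite V] {s : Set V} {f : V → V} (hf : Set.InjOn f s)
    (hfs : ∀ x ∈ s, f x ∉ s) (hadj : ∀ x ∈ s, G.Adj x (f x)) :
    ∃ M : G.Subgraph, M.IsMatching ∧ M.verts = s ∪ f '' s ∧ s.ncard ≤ M.edgeSet.ncard := by
  let M : G.Subgraph :=
    { verts := s ∪ f '' s
      Adj x y := (x ∈ s ∧ y = f x) ∨ (y ∈ s ∧ x = f y)
      adj_sub := by
        rintro x y (⟨hx, rfl⟩ | ⟨hy, rfl⟩)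
        exacts [hadj x hx, (hadj y hy).symm]
      edge_vert := by
        rintro x y (⟨hx, -⟩ | ⟨hy, rfl⟩)
        exacts [Or.inl hx, Or.inr ⟨y, hy, rfl⟩]
      symm := ⟨fun _ _ => Or.symm⟩ }
  refine ⟨M, ?_, rfl, ?_⟩
  · rintro x (hx | ⟨y, hy, rfl⟩)
    · refine ⟨f x, Or.inl ⟨hx, rfl⟩, ?_⟩
      rintro z (⟨-, rfl⟩ | ⟨hz, rfl⟩)
      exacts [rfl, absurd hx (hfs z hz)]
    · refine ⟨y, Or.inr ⟨hy, rfl⟩, ?_⟩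
      rintro z (⟨hfy, -⟩ | ⟨hz, hzy⟩)
      exacts [absurd hfy (hfs y hy), hf hz hy hzy.symm]
  · refine Set.ncard_le_ncard_of_injOn (fun x => s(x, f x)) (fun x hx => Or.inl ⟨hx, rfl⟩) ?_
    intro x hx y hy hxy
    rcases Sym2.eq_iff.mp hxy with ⟨h, -⟩ | ⟨h, -⟩
    · exact h
    · exact absurd (h ▸ hx) (hfs y hy)

end SimpleGraph.Subgraph

section CriticalIndependentSets

variable {G : SimpleGraph V}

lemma IsIndep.mono {S T : Set V} (hS : IsIndep G S) (hTS : T ⊆ S) : IsIndep G T :=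
  fun _ hu _ hv => hS (hTS hu) (hTS hv)

lemma IsIndep.disjoint_nset {S : Set V} (hS : IsIndep G S) : Disjoint S (NSet G S) :=
  Set.disjoint_left.mpr fun _ hx ⟨_, hu, hux⟩ => hS hu hx hux

lemma exists_isCriticalIndep [Finite V] (G : SimpleGraph V) : ∃ S, IsCriticalIndep G S := by
  obtain ⟨S, hS, hmax⟩ := Set.exists_max_image {S : Set V | IsIndep G S} (diffZ G)
    (Set.toFinite _) ⟨∅, fun _ h => h.elim⟩
  exact ⟨S, hS, hmax⟩

lemma exists_isMaxMatching [Finite V] (G : SimpleGraph V) : ∃ M, IsMaxMatching G M := by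
  obtain ⟨M, hM, hmax⟩ := Set.exists_max_image {M : G.Subgraph | M.IsMatching}
    (·.edgeSet.ncard) (Set.toFinite _) ⟨⊥, fun _ h => h.elim⟩
  exact ⟨M, hM, hmax⟩

lemma diffZ_add_ncard_le [Finite V] {I A : Set V} (hA : A ⊆ NSet G I) :
    diffZ G I + A.ncard ≤ diffZ G (I \ NSet G A) + (I ∩ NSet G A).ncard := by
  have hN : NSet G (I \ NSet G A) ⊆ NSet G I \ A := by
    rintro x ⟨u, ⟨huI, huA⟩, hux⟩
    exact ⟨⟨u, huI, hux⟩, fun hxA => huA ⟨x, hxA, hux.symm⟩⟩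
  have := Set.ncard_le_ncard hN
  have := Set.ncard_sdiff_add_ncard_of_subset hA
  have := Set.ncard_inter_add_ncard_sdiff_eq_ncard I (NSet G A)
  unfold diffZ
  omega

lemma ncard_le_ncard_nset_inter_sdiff_singleton [Finite V] {I : Set V}
    (hI : Minimal (IsCriticalIndep G) I) (v : V) {A : Set V} (hA : A ⊆ NSet G I) :
    A.ncard ≤ (NSet G A ∩ (I \ {v})).ncard := by
  by_contra! hlt
  have hdiff := diffZ_add_ncard_le hA
  have hinter : (I ∩ NSet G A).ncard ≤ (NSet G A ∩ (I \ {v})).ncard + 1 := by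
    rw [Set.inter_comm, ← Set.inter_sdiff_assoc, ← Set.ncard_singleton v]
    exact Set.ncard_le_ncard_sdiff_add_ncard _ _
  have hcrit : IsCriticalIndep G (I \ NSet G A) :=
    ⟨hI.prop.1.mono Set.sdiff_subset, fun T hT => (hI.prop.2 T hT).trans (by omega)⟩
  have hsame : I \ NSet G A = I := hI.eq_of_subset hcrit Set.sdiff_subset
  rw [hsame, (sdiff_eq_left.mp hsame).inter_eq, Set.ncard_empty] at hdiff
  omega

lemma exists_injOn_of_forall_ncard_le [Finite V] {s t : Set V}
    (h : ∀ A ⊆ s, A.ncard ≤ (NSet G A ∩ t).ncard) :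
    ∃ f : V → V, Set.InjOn f s ∧ ∀ x ∈ s, G.Adj x (f x) ∧ f x ∈ t := by
  classical
  have := Fintype.ofFinite V
  obtain ⟨f, hf, hft⟩ := (Fintype.all_card_le_filter_rel_iff_exists_injective
    (fun (x : s) y => G.Adj x y ∧ y ∈ t)).mp fun A => by
      have hA := h (A.map (Function.Embedding.subtype _)) (by simp)
      rw [Set.ncard_coe_finset, Finset.card_map] at hA
      convert hA using 1
      rw [← Set.ncard_coe_finset]
      congr 1
      ext y
      simp [NSet, ← and_assoc]
  refine ⟨fun x => if hx : x ∈ s then f ⟨x, hx⟩ else x, ?_,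
    fun x hx => by simpa [hx] using hft ⟨x, hx⟩⟩
  intro x hx y hy hxy
  exact congrArg Subtype.val (hf (by simpa [hx, hy] using hxy))

lemma sdiff_verts_subset_DSet [Finite V] {M₀ : G.Subgraph} (hM₀ : M₀.IsMatching) {P K : Set V}
    (hK : ∀ ⦃x y⦄, G.Adj x y → x ∈ P → x ∈ K ∨ y ∈ K) (hM₀P : M₀.verts ⊆ P)
    (hcard : K.ncard ≤ M₀.edgeSet.ncard) : P \ M₀.verts ⊆ DSet G := by
  rintro v ⟨hvP, hvM₀⟩
  obtain ⟨M, hM, hMmax⟩ := exists_isMaxMatching G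
  obtain ⟨M', hM', hcard', hverts⟩ :=
    hM.exists_sup_ncard_edgeSet_le hM₀ (fun _ _ hxy => hK (M.adj_sub hxy)) hM₀P hcard
  exact ⟨M', ⟨hM', fun N hN => (hMmax N hN).trans hcard'⟩,
    fun hv => (hverts hv).elim hvM₀ (· hvP)⟩

theorem subset_DSet_of_minimal_isCriticalIndep [Finite V] {I : Set V}
    (hI : Minimal (IsCriticalIndep G) I) : I ⊆ DSet G := by
  intro v hv
  have hdisj := hI.prop.1.disjoint_nset
  obtain ⟨f, hf, hfI⟩ := exists_injOn_of_forall_ncard_le fun A hA =>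
    ncard_le_ncard_nset_inter_sdiff_singleton hI v hA
  obtain ⟨M₀, hM₀, hverts, hcard⟩ := Subgraph.exists_isMatching_of_injOn hf
    (fun x hx => hdisj.notMem_of_mem_left (hfI x hx).2.1) (fun x hx => (hfI x hx).1)
  have hP : M₀.verts ⊆ I ∪ NSet G I := hverts ▸ Set.union_subset Set.subset_union_right
    (Set.image_subset_iff.mpr fun x hx => Or.inl (hfI x hx).2.1)
  refine sdiff_verts_subset_DSet hM₀ (K := NSet G I) ?_ hP hcard ⟨Or.inl hv, ?_⟩
  · rintro x y hxy (hx | hx)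
    exacts [Or.inr ⟨x, hx, hxy⟩, Or.inl hx]
  · rw [hverts]
    rintro (hvN | ⟨x, hx, hxv⟩)
    exacts [hdisj.notMem_of_mem_left hv hvN, (hfI x hx).2.2 hxv]

end CriticalIndependentSets

/-- Every finite graph has a critical independent set contained in `D(G)`. -/
theorem stmt_4 {V : Type u} [Fintype V] (G : SimpleGraph V) :
    ∃ I : Set V, IsCriticalIndep G I ∧ I ⊆ DSet G := by
  obtain ⟨I, hI⟩ := exists_minimal_of_wellFoundedLT (IsCriticalIndep G) (exists_isCriticalIndep G)
  exact ⟨I, hI.prop, subset_DSet_of_minimal_isCriticalIndep hI⟩
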